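/- Let v be a vertex with v ≠ s whose incoming edges come from predecessors p_1,…,p_d (with multiplicity for parallel edges) with first-instance weights l_1,…,l_d and second-instance weights l′_1,…,l′_d, let a ≥ 1 be an integer, and let B be a real budget. Then τ₂(v, a, B) = min over all tuples (a_1,…,a_d) of nonnegative integers with a_1+⋯+a_d = a of max_{1≤s≤d} ( τ₂(p_s, a_s, B − l_s) + l′_s ), where the minimum over an empty set of tuples (d = 0) is +∞ and the case a_s = 0 uses τ₂(p_s, 0, ·) = −∞. -/

import Mathlib

open scoped BigOperators

/-- `IsWalk src dst u v p` : the list of edges `p` forms a directed walk from `u` to `v`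
in the multigraph whose edges `e` go from `src e` to `dst e`. -/
def IsWalk {V E : Type} (src dst : E → V) : V → V → List E → Prop
  | u, v, [] => u = v
  | u, v, e :: p => src e = u ∧ IsWalk src dst (dst e) v p

/-- `tau2 src dst l l' s v a B` : the smallest threshold `L₂ ∈ ℝ` (as an element of
`ℝ ∪ {−∞, +∞}`) such that at least `a` directed `s`–`v` paths have `l`-weight at most `B`
and `l'`-weight at most `L₂`; it is `−∞` when `a ≤ 0` and `+∞` when fewer than `a`
`s`–`v` paths of `l`-weight at most `B` exist. -/
noncomputable def tau2 {V E : Type} (src dst : E → V) (l l' : E → ℝ) (s v : V)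
    (a B : ℝ) : EReal :=
  sInf {x : EReal | ∃ L₂ : ℝ, x = (L₂ : EReal) ∧
    a ≤ (Nat.card {p : List E // IsWalk src dst s v p ∧
      (p.map l).sum ≤ B ∧ (p.map l').sum ≤ L₂} : ℝ)}

/-!
Every `s`–`v` walk with `v ≠ s` ends with a unique edge `e` into `v`, so the number of walks
into `v` within budgets `(B, L)` is the sum over incoming edges `e` of the number of walks into
`src e` within `(B - l e, L - l' e)`. Hence `τ₂(v, a, B) ≤ L` is, up to passing to a slightly
larger `L`, the statement that `a` splits as `∑ a_e` with `τ₂(src e, a_e, B - l e) + l' e ≤ L`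
for all `e`. Acyclicity only enters through finiteness of the set of walks, which makes
`Nat.card` an honest count.
-/

theorem Finset.exists_le_and_sum_eq {ι : Type*} (t : Finset ι) (N : ι → ℕ)
    {a : ℕ} (h : a ≤ ∑ i ∈ t, N i) : ∃ f : ι → ℕ, (∀ i, f i ≤ N i) ∧ ∑ i ∈ t, f i = a := by
  classical
  induction t using Finset.cons_induction generalizing a with
  | empty => exact ⟨0, fun _ => Nat.zero_le _, by simp_all⟩
  | cons i t hi ih =>
    rw [Finset.sum_cons] at h
    obtain ⟨f, hfN, hfsum⟩ := ih (a := a - min a (N i)) (by omega)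
    refine ⟨Function.update f i (min a (N i)), fun j => ?_, ?_⟩
    · rcases eq_or_ne j i with rfl | hj
      · simp
      · simpa [hj] using hfN j
    · rw [Finset.sum_cons, Function.update_self,
        Finset.sum_congr rfl fun j hj => Function.update_of_ne (ne_of_mem_of_not_mem hj hi) _ _,
        hfsum]
      omega

theorem EReal.add_coe_le_coe_iff (x : EReal) (c L : ℝ) : x + c ≤ L ↔ x ≤ ((L - c : ℝ) : EReal) := by
  rw [EReal.coe_sub,
    EReal.le_sub_iff_add_le (.inl (EReal.coe_ne_bot c)) (.inl (EReal.coe_ne_top c))]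

theorem EReal.add_coe_lt_coe_iff (x : EReal) (c L : ℝ) : x + c < L ↔ x < ((L - c : ℝ) : EReal) := by
  rw [EReal.coe_sub,
    EReal.lt_sub_iff_add_lt (.inl (EReal.coe_ne_bot c)) (.inl (EReal.coe_ne_top c))]

section

variable {V E : Type} (src dst : E → V)

theorem IsWalk.ord_add_length_le {ord : V → ℕ} (hacyc : ∀ e, ord (src e) < ord (dst e)) :
    ∀ {p : List E} {u w : V}, IsWalk src dst u w p → ord u + p.length ≤ ord w
  | [], _, _, h => by cases h; simp
  | e :: _, _, _, ⟨rfl, hp⟩ => by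
    have := IsWalk.ord_add_length_le hacyc hp
    have := hacyc e
    simp only [List.length_cons]
    omega

theorem isWalk_append_singleton (e : E) :
    ∀ {q : List E} {u w : V}, IsWalk src dst u w (q ++ [e]) ↔ IsWalk src dst u (src e) q ∧ dst e = w
  | [], _, _ => ⟨fun h => ⟨h.1.symm, h.2⟩, fun h => ⟨h.1.symm, h.2⟩⟩
  | f :: _, _, _ => by
    simp only [List.cons_append, IsWalk, isWalk_append_singleton e, and_assoc]

theorem finite_setOf_isWalk [Finite E] {ord : V → ℕ} (hacyc : ∀ e, ord (src e) < ord (dst e))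
    (u w : V) : {p : List E | IsWalk src dst u w p}.Finite :=
  (List.finite_length_le E (ord w)).subset fun p hp => by
    have := IsWalk.ord_add_length_le src dst hacyc hp
    simp only [Set.mem_ofPred_eq]
    omega

theorem sum_map_append_singleton (w : E → ℝ) (q : List E) (e : E) :
    ((q ++ [e]).map w).sum = (q.map w).sum + w e := by
  simp

variable (l l' : E → ℝ) (s : V)

noncomputable def walkCount (u : V) (B L : ℝ) : ℕ :=
  Nat.card {p : List E // IsWalk src dst s u p ∧ (p.map l).sum ≤ B ∧ (p.map l').sum ≤ L}

variable [Finite E] {ord : V → ℕ} (hacyc : ∀ e, ord (src e) < ord (dst e))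
include hacyc

theorem finite_walksWithin (u : V) (B L : ℝ) :
    Finite {p : List E // IsWalk src dst s u p ∧ (p.map l).sum ≤ B ∧ (p.map l').sum ≤ L} :=
  ((finite_setOf_isWalk src dst hacyc s u).subset fun _ hp => hp.1).to_subtype

theorem walkCount_mono (u : V) (B : ℝ) {L L' : ℝ} (h : L ≤ L') :
    walkCount src dst l l' s u B L ≤ walkCount src dst l l' s u B L' :=
  have := finite_walksWithin src dst l l' s hacyc u B L'
  Nat.card_le_card_of_injective (fun p => ⟨p.1, p.2.1, p.2.2.1, p.2.2.2.trans h⟩)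
    fun _ _ hpq => Subtype.ext (congrArg Subtype.val hpq :)

theorem walkCount_eq_sum_incoming [Fintype E] [DecidableEq V] {v : V} (hv : v ≠ s) (B L : ℝ) :
    walkCount src dst l l' s v B L =
      ∑ e ∈ Finset.univ.filter (fun e => dst e = v),
        walkCount src dst l l' s (src e) (B - l e) (L - l' e) := by
  have := finite_walksWithin src dst l l' s hacyc
  let appendLast : (Σ e : {e // dst e = v}, {q : List E // IsWalk src dst s (src e.1) q ∧
      (q.map l).sum ≤ B - l e.1 ∧ (q.map l').sum ≤ L - l' e.1}) →
      {p : List E // IsWalk src dst s v p ∧ (p.map l).sum ≤ B ∧ (p.map l').sum ≤ L} :=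
    fun x => ⟨x.2.1 ++ [x.1.1], (isWalk_append_singleton src dst _).2 ⟨x.2.2.1, x.1.2⟩,
      by rw [sum_map_append_singleton]; linarith [x.2.2.2.1],
      by rw [sum_map_append_singleton]; linarith [x.2.2.2.2]⟩
  have hbij : Function.Bijective appendLast := by
    constructor
    · rintro ⟨⟨e, _⟩, ⟨q, _⟩⟩ ⟨⟨e', _⟩, ⟨q', _⟩⟩ h
      have happ : q ++ [e] = q' ++ [e'] := congrArg Subtype.val h
      obtain ⟨rfl, he⟩ := List.append_inj' happ rfl
      cases List.singleton_inj.1 he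
      rfl
    · rintro ⟨p, hp, hl, hl'⟩
      obtain rfl | ⟨q, e, rfl⟩ := List.eq_nil_or_concat' p
      · exact absurd hp.symm hv
      obtain ⟨hq, he⟩ := (isWalk_append_singleton src dst e).1 hp
      rw [sum_map_append_singleton] at hl hl'
      exact ⟨⟨⟨e, he⟩, ⟨q, hq, by linarith, by linarith⟩⟩, rfl⟩
  rw [walkCount, ← Nat.card_eq_of_bijective appendLast hbij, Nat.card_sigma]
  exact (Finset.sum_subtype _ (fun _ => Finset.mem_filter_univ _)
    fun e => walkCount src dst l l' s (src e) (B - l e) (L - l' e)).symm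

omit [Finite E] hacyc in
theorem tau2_le_coe_of_le_walkCount {u : V} {b B L : ℝ}
    (h : b ≤ walkCount src dst l l' s u B L) : tau2 src dst l l' s u b B ≤ L :=
  sInf_le ⟨L, rfl, h⟩

theorem le_walkCount_of_tau2_lt_coe {u : V} {b B L : ℝ} (h : tau2 src dst l l' s u b B < L) :
    b ≤ walkCount src dst l l' s u B L := by
  obtain ⟨_, ⟨L₀, rfl, hL₀⟩, hlt⟩ := sInf_lt_iff.1 h
  have hmono := walkCount_mono src dst l l' s hacyc u B (EReal.coe_lt_coe_iff.1 hlt).le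
  exact hL₀.trans (by exact_mod_cast hmono)

omit [Finite E] hacyc in
theorem tau2_add_le_coe_of_le_walkCount {u : V} {b B c L : ℝ}
    (h : b ≤ walkCount src dst l l' s u B (L - c)) : tau2 src dst l l' s u b B + c ≤ L :=
  (EReal.add_coe_le_coe_iff _ c L).2 (tau2_le_coe_of_le_walkCount src dst l l' s h)

theorem le_walkCount_of_tau2_add_lt_coe {u : V} {b B c L : ℝ}
    (h : tau2 src dst l l' s u b B + c < L) : b ≤ walkCount src dst l l' s u B (L - c) :=
  le_walkCount_of_tau2_lt_coe src dst l l' s hacyc ((EReal.add_coe_lt_coe_iff _ c L).1 h)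

end

theorem stmt13_general
    {V E : Type} [Fintype E] [DecidableEq V]
    (src dst : E → V) (l l' : E → ℝ)
    (ord : V → ℕ) (hacyc : ∀ e, ord (src e) < ord (dst e))
    (s : V) (v : V) (hv : v ≠ s) (a : ℕ) (B : ℝ) :
    tau2 src dst l l' s v (a : ℝ) B = sInf {x : EReal |
      ∃ f : E → ℕ,
        (∑ e ∈ Finset.univ.filter (fun e => dst e = v), f e) = a ∧
        x = (Finset.univ.filter (fun e => dst e = v)).sup
          (fun e => tau2 src dst l l' s (src e) (f e : ℝ) (B - l e) + (l' e : EReal))} := by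
  set T := Finset.univ.filter (fun e => dst e = v)
  apply le_antisymm
  · refine le_sInf ?_
    rintro _ ⟨f, hf, rfl⟩
    refine EReal.le_of_forall_lt_iff_le.1 fun L hL => tau2_le_coe_of_le_walkCount src dst l l' s ?_
    have hsplit : ∀ e ∈ T, f e ≤ walkCount src dst l l' s (src e) (B - l e) (L - l' e) :=
      fun e he => by
        have hlt := (Finset.le_sup (f := fun e => tau2 src dst l l' s (src e) (f e : ℝ) (B - l e)
          + (l' e : EReal)) he).trans_lt hL
        exact_mod_cast le_walkCount_of_tau2_add_lt_coe src dst l l' s hacyc hlt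
    rw [walkCount_eq_sum_incoming src dst l l' s hacyc hv, ← hf]
    exact_mod_cast Finset.sum_le_sum hsplit
  · refine le_sInf ?_
    rintro _ ⟨L, rfl, hL⟩
    change (a : ℝ) ≤ walkCount src dst l l' s v B L at hL
    rw [walkCount_eq_sum_incoming src dst l l' s hacyc hv] at hL
    obtain ⟨f, hfN, hf⟩ := Finset.exists_le_and_sum_eq T _ (by exact_mod_cast hL)
    refine le_trans (sInf_le ⟨f, hf, rfl⟩) (Finset.sup_le fun e _ => ?_)
    exact tau2_add_le_coe_of_le_walkCount src dst l l' s (by exact_mod_cast hfN e)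

theorem stmt13
    {V E : Type} [Fintype V] [Fintype E] [DecidableEq V]
    (src dst : E → V) (l l' : E → ℝ)
    (ord : V → ℕ) (hacyc : ∀ e, ord (src e) < ord (dst e))
    (s : V) (v : V) (hv : v ≠ s) (a : ℕ) (ha : 1 ≤ a) (B : ℝ) :
    tau2 src dst l l' s v (a : ℝ) B = sInf {x : EReal |
      ∃ f : E → ℕ,
        (∑ e ∈ Finset.univ.filter (fun e => dst e = v), f e) = a ∧
        x = (Finset.univ.filter (fun e => dst e = v)).sup
          (fun e => tau2 src dst l l' s (src e) (f e : ℝ) (B - l e) + (l' e : EReal))} :=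
  stmt13_general src dst l l' ord hacyc s v hv a B
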